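/- For any two pseudo-differential operators P, Q, the residue satisfies res_∂(PQ) = res_∂(QP) modulo total derivatives; more precisely, res_∂(PQ − QP) is a total x-derivative (lies in the image of ∂_x on the coefficient ring). -/

import Mathlib

open scoped BigOperators

namespace PdoPaper

/-- Generalized binomial coefficient `C(i, k)` for an integer upper index `i`, as a rational:
`C(i,k) = i(i-1)⋯(i-k+1)/k!`. -/
noncomputable def zchoose (i : ℤ) (k : ℕ) : ℚ :=
  (∏ j ∈ Finset.range k, ((i : ℚ) - (j : ℚ))) / (Nat.factorial k : ℚ)

/-- A formal pseudo-differential operator `P = Σ_{i ≤ bound} (coeff i) ∂^i` over a ring `R`: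
a coefficient function `coeff : ℤ → R` vanishing above the bound. -/
structure PDO (R : Type) [CommRing R] [Algebra ℚ R] where
  coeff : ℤ → R
  bound : ℤ
  coeff_eq_zero : ∀ i : ℤ, bound < i → coeff i = 0

namespace PDO

variable {R : Type} [CommRing R] [Algebra ℚ R] (d : R → R)

/-- Multiplication of pseudo-differential operators, determined by the rule
`∂^i ∘ a = Σ_{k≥0} C(i,k) d^k(a) ∂^{i-k}` (`d` is the derivation of the coefficient ring).
The coefficient of `∂^m` in `P·Q` is `Σ_{i,k} C(i,k) · (P.coeff i) · d^k(Q.coeff (m-i+k))`. -/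
noncomputable def mul (P Q : PDO R) : PDO R where
  coeff m := ∑ i ∈ Finset.Icc (m - Q.bound) P.bound,
    ∑ k ∈ Finset.range ((Q.bound - m + i).toNat + 1),
      zchoose i k • (P.coeff i * d^[k] (Q.coeff (m - i + k)))
  bound := P.bound + Q.bound
  coeff_eq_zero := by
    intro m hm
    rw [Finset.Icc_eq_empty (by omega : ¬ (m - Q.bound ≤ P.bound))]
    simp

/-- The formal adjoint, determined by `(a ∂^i)* = (-∂)^i ∘ a`; its coefficient of `∂^m` is
`Σ_{i ≥ m} (-1)^i C(i, i-m) d^{i-m}(P.coeff i)`. -/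
noncomputable def adj (P : PDO R) : PDO R where
  coeff m := ∑ i ∈ Finset.Icc m P.bound,
      (((-1 : ℚ) ^ i) * zchoose i (i - m).toNat) • d^[(i - m).toNat] (P.coeff i)
  bound := P.bound
  coeff_eq_zero := by
    intro m hm
    rw [Finset.Icc_eq_empty (by omega : ¬ (m ≤ P.bound))]
    simp

/-- The residue of a pseudo-differential operator: the coefficient of `∂^{-1}`. -/
def res (P : PDO R) : R := P.coeff (-1)

/-- The pseudo-differential operator `∂^m` (`m ∈ ℤ`). -/
def delPow (m : ℤ) : PDO R where
  coeff i := if i = m then 1 else 0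
  bound := m
  coeff_eq_zero := by
    intro i h
    simp [show i ≠ m by omega]

/-- The multiplication operator by a function `f` (i.e. `f ∂^0`). -/
def ofFun (f : R) : PDO R where
  coeff i := if i = 0 then f else 0
  bound := 0
  coeff_eq_zero := by
    intro i h
    simp [show i ≠ 0 by omega]

/-- Difference of pseudo-differential operators. -/
def sub (P Q : PDO R) : PDO R where
  coeff i := P.coeff i - Q.coeff i
  bound := max P.bound Q.bound
  coeff_eq_zero := by
    intro i h
    rw [P.coeff_eq_zero i ((le_max_left _ _).trans_lt h),
      Q.coeff_eq_zero i ((le_max_right _ _).trans_lt h), sub_self]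

/-- `n`-th power of a pseudo-differential operator. -/
noncomputable def npow (P : PDO R) : ℕ → PDO R
  | 0 => delPow 0
  | n + 1 => mul d (npow P n) P

/-- The differential-operator (non-negative) part `P₊`. -/
def posPart (P : PDO R) : PDO R where
  coeff i := if 0 ≤ i then P.coeff i else 0
  bound := P.bound
  coeff_eq_zero := by
    intro i h
    rw [P.coeff_eq_zero i h]
    simp

/-- The strictly negative part `P₋`. -/
def negPart (P : PDO R) : PDO R where
  coeff i := if i < 0 then P.coeff i else 0
  bound := -1
  coeff_eq_zero := by
    intro i h
    simp [show ¬ i < 0 by omega]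

/-- Application of (the differential-operator part of) a pseudo-differential operator
to a function `f` of the coefficient ring: `(Σ_{i≥0} a_i ∂^i)(f) = Σ_{i≥0} a_i d^i(f)`. -/
noncomputable def app (P : PDO R) (f : R) : R :=
  ∑ i ∈ Finset.range (P.bound.toNat + 1), P.coeff (i : ℤ) * d^[i] f

end PDO

end PdoPaper

/-!
In `res (P * Q)` the coefficient `P_i` meets `Q_j` exactly when `k = i + j + 1 ≥ 0`, with weight
`C(i, k) P_i d^k Q_j`; in `res (Q * P)` the same pair contributes `C(j, k) Q_j d^k P_i`. Since
`j = k - 1 - i`, reflecting the product defining the binomial coefficient gives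
`C(j, k) = (-1)^k C(i, k)`, so the pair contributes `C(i, k) (P_i d^k Q_j - (-1)^k (d^k P_i) Q_j)`
to the difference, and `k`-fold integration by parts (a telescoping sum) writes it as `d` of an
alternating sum.
-/

namespace PdoPaper

open Finset

theorem zchoose_eq_neg_one_pow_mul_zchoose {i j : ℤ} {k : ℕ} (hk : i + j + 1 = k) :
    zchoose j k = (-1 : ℚ) ^ k * zchoose i k := by
  obtain rfl : j = -1 - i + k := by omega
  have h_factor : ∀ m ∈ range k,
      ((-1 - i + k : ℤ) : ℚ) - ((k - 1 - m : ℕ) : ℚ) = -1 * ((i : ℚ) - m) := by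
    intro m hm
    have := mem_range.mp hm
    rw [Nat.cast_sub (by omega), Nat.cast_sub (by omega)]
    push_cast
    ring
  rw [zchoose, zchoose, ← mul_div_assoc, ← prod_range_reflect, prod_congr rfl h_factor,
    prod_mul_distrib, prod_const, card_range]

section Leibniz

variable {R : Type} [CommRing R] (d : R →+ R)

theorem mul_iterate_sub_neg_one_pow_smul_iterate_mul
    (hd_mul : ∀ a b : R, d (a * b) = d a * b + a * d b) (n : ℕ) (a b : R) :
    a * d^[n] b - (-1 : ℤ) ^ n • (d^[n] a * b) =
      d (∑ s ∈ range n, (-1 : ℤ) ^ s • (d^[s] a * d^[n - 1 - s] b)) := by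
  let t : ℕ → R := fun s => (-1 : ℤ) ^ s • (d^[s] a * d^[n - s] b)
  have h_step : ∀ s ∈ range n,
      d ((-1 : ℤ) ^ s • (d^[s] a * d^[n - 1 - s] b)) = t s - t (s + 1) := by
    intro s hs
    have hns : n - s = n - 1 - s + 1 := by have := mem_range.mp hs; omega
    simp only [t, map_zsmul, hd_mul, hns, Function.iterate_succ_apply', pow_succ,
      Nat.sub_sub, Nat.add_comm 1 s]
    rw [mul_neg_one, neg_smul, sub_neg_eq_add, smul_add, add_comm]
  rw [map_sum, sum_congr rfl h_step, sum_range_sub']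
  simp [t]

theorem zchoose_smul_mul_iterate_sub_mem_range [Algebra ℚ R]
    (hd_mul : ∀ a b : R, d (a * b) = d a * b + a * d b) {i j : ℤ} {k : ℕ} (hk : i + j + 1 = k)
    (a b : R) : zchoose i k • (a * d^[k] b) - zchoose j k • (b * d^[k] a) ∈ d.range := by
  have h_sign : ((-1 : ℚ) ^ k) • (b * d^[k] a) = (-1 : ℤ) ^ k • (d^[k] a * b) := by
    rw [← Int.cast_smul_eq_zsmul ℚ, mul_comm b]
    push_cast
    rfl
  rw [zchoose_eq_neg_one_pow_mul_zchoose hk, mul_smul, smul_comm, h_sign, ← smul_sub,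
    mul_iterate_sub_neg_one_pow_smul_iterate_mul d hd_mul, ← map_rat_smul]
  exact ⟨_, rfl⟩

end Leibniz

namespace PDO

variable {R : Type} [CommRing R] [Algebra ℚ R]

theorem res_mul_eq_sum (d : R → R) (P Q : PDO R) :
    res (mul d P Q) = ∑ i ∈ Icc (-1 - Q.bound) P.bound, ∑ j ∈ Icc (-1 - P.bound) Q.bound,
      if 0 ≤ i + j + 1 then
        zchoose i (i + j + 1).toNat • (P.coeff i * d^[(i + j + 1).toNat] (Q.coeff j))
      else 0 := by
  unfold res mul
  dsimp only
  refine sum_congr rfl fun i hi => ?_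
  rw [mem_Icc] at hi
  rw [← sum_filter]
  refine sum_nbij' (fun k : ℕ => -1 - i + k) (fun j : ℤ => (i + j + 1).toNat) ?_ ?_ ?_ ?_ ?_
  · intro k hk
    simp only [mem_range, mem_filter, mem_Icc] at hk ⊢
    omega
  · intro j hj
    simp only [mem_range, mem_filter, mem_Icc] at hj ⊢
    omega
  · intro k _
    omega
  · intro j hj
    simp only [mem_filter, mem_Icc] at hj ⊢
    omega
  · intro k _
    simp only [show (i + (-1 - i + k) + 1).toNat = k by omega]

end PDO

end PdoPaper

open PdoPaper PdoPaper.PDO in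
/-- `res_∂(PQ) = res_∂(QP)` modulo total derivatives: `res_∂(PQ - QP)` is a
total `x`-derivative, i.e. lies in the image of the derivation `d` of the coefficient ring. -/
theorem res_commutator_is_total_derivative {R : Type} [CommRing R] [Algebra ℚ R] (d : R → R)
    (hd_add : ∀ a b : R, d (a + b) = d a + d b)
    (hd_mul : ∀ a b : R, d (a * b) = d a * b + a * d b)
    (P Q : PDO R) :
    ∃ g : R, res (mul d P Q) - res (mul d Q P) = d g := by
  let D : R →+ R := AddMonoidHom.mk' d hd_add
  suffices res (mul d P Q) - res (mul d Q P) ∈ D.range by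
    obtain ⟨g, hg⟩ := this
    exact ⟨g, hg.symm⟩
  rw [res_mul_eq_sum, res_mul_eq_sum, Finset.sum_comm (s := Finset.Icc (-1 - P.bound) Q.bound),
    ← Finset.sum_sub_distrib]
  refine AddSubgroup.sum_mem _ fun i _ => ?_
  rw [← Finset.sum_sub_distrib]
  refine AddSubgroup.sum_mem _ fun j _ => ?_
  rw [show j + i + 1 = i + j + 1 by ring]
  split_ifs with h
  · lift i + j + 1 to ℕ using h with k hk
    exact zchoose_smul_mul_iterate_sub_mem_range D hd_mul hk.symm _ _
  · rw [sub_self]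
    exact zero_mem _
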